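/- arXiv:1508.06149 — 2 statements merged into one kernel-verified Lean document; each statement's English description precedes it below -/
import Mathlib

section
/- Let f : [0,∞) → [0,∞) be continuous with ∫₀ᵗ f(s) ds ≤ B for all t in [0,T), and let z(t) = e^{-∫₀ᵗ f(s)ds - t} + ∫₀ᵗ e^{-∫ₛᵗ f(σ)dσ - (t-s)} ds. Then z(t) ≥ e^{-(B+1)} for all t ∈ [0,T). -/
open MeasureTheory
open scoped ENNReal

theorem stmt_0 (f : ℝ → ℝ) (T : ℝ≥0∞) (hT : 0 < T) (B : ℝ) (hB : 0 < B)
    (hf : Continuous f) (hf0 : ∀ t : ℝ, 0 ≤ t → 0 ≤ f t)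
    (hint : ∀ t : ℝ, 0 ≤ t → ENNReal.ofReal t < T → (∫ s in (0:ℝ)..t, f s) ≤ B)
    (z : ℝ → ℝ)
    (hz : ∀ t : ℝ, z t =
      Real.exp (-(∫ s in (0:ℝ)..t, f s) - t)
        + ∫ s in (0:ℝ)..t, Real.exp (-(∫ σ in s..t, f σ) - (t - s))) :
    ∀ t : ℝ, 0 ≤ t → ENNReal.ofReal t < T → Real.exp (-(B + 1)) ≤ z t := by
  intro t ht htT
  have hI : ∀ a b : ℝ, IntervalIntegrable f volume a b := fun a b => hf.intervalIntegrable a b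
  have hA : (∫ s in (0:ℝ)..t, f s) ≤ B := hint t ht htT
  have hsplit : ∀ s : ℝ, (∫ σ in s..t, f σ)
      = (∫ σ in (0:ℝ)..t, f σ) - ∫ σ in (0:ℝ)..s, f σ := fun s =>
    (intervalIntegral.integral_interval_sub_left (hI 0 t) (hI 0 s)).symm
  have hsub : ∀ s : ℝ, 0 ≤ s → s ≤ t → (∫ σ in s..t, f σ) ≤ B := by
    intro s hs hst
    have h2 : 0 ≤ ∫ σ in (0:ℝ)..s, f σ :=
      intervalIntegral.integral_nonneg hs (fun x hx => hf0 x hx.1)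
    rw [hsplit s]; linarith
  have hcont : Continuous fun s : ℝ => Real.exp (-(∫ σ in s..t, f σ) - (t - s)) := by
    have h1 : Continuous fun s : ℝ => ∫ σ in (0:ℝ)..s, f σ :=
      intervalIntegral.continuous_primitive hI 0
    have h2 : Continuous fun s : ℝ => ∫ σ in s..t, f σ := by
      have he : (fun s : ℝ => ∫ σ in s..t, f σ)
          = fun s : ℝ => (∫ σ in (0:ℝ)..t, f σ) - ∫ σ in (0:ℝ)..s, f σ := funext hsplit
      rw [he]
      exact continuous_const.sub h1
    exact Real.continuous_exp.comp ((h2.neg).sub (continuous_const.sub continuous_id))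
  have hmono : (∫ s in (0:ℝ)..t, Real.exp (-B) * Real.exp (s - t))
      ≤ ∫ s in (0:ℝ)..t, Real.exp (-(∫ σ in s..t, f σ) - (t - s)) := by
    apply intervalIntegral.integral_mono_on ht
    · exact (continuous_const.mul (Real.continuous_exp.comp (continuous_id.sub continuous_const))).intervalIntegrable 0 t
    · exact hcont.intervalIntegrable 0 t
    · intro s hs
      rw [← Real.exp_add]
      apply Real.exp_le_exp.mpr
      have := hsub s hs.1 hs.2
      linarith
  have hcalc : (∫ s in (0:ℝ)..t, Real.exp (-B) * Real.exp (s - t))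
      = Real.exp (-B) * (1 - Real.exp (-t)) := by
    rw [intervalIntegral.integral_const_mul]
    have he : ∀ s : ℝ, Real.exp (s - t) = Real.exp s * Real.exp (-t) := fun s => by
      rw [← Real.exp_add]; ring_nf
    simp only [he]
    rw [intervalIntegral.integral_mul_const, integral_exp, Real.exp_zero]
    rw [sub_mul, ← Real.exp_add, add_neg_cancel, Real.exp_zero, one_mul]
  have h1 : Real.exp (-B) * Real.exp (-t) ≤ Real.exp (-(∫ s in (0:ℝ)..t, f s) - t) := by
    rw [← Real.exp_add]
    apply Real.exp_le_exp.mpr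
    linarith
  have h2 : Real.exp (-(B + 1)) ≤ Real.exp (-B) := Real.exp_le_exp.mpr (by linarith)
  rw [hz t]
  have := hmono
  rw [hcalc] at this
  nlinarith [Real.exp_pos (-B), Real.exp_pos (-t)]
end

section
/- Let f : [0,T) → [0,∞) be continuous with ∫₀ᵗ f(s)ds ≤ B for all t ∈ [0,T), and let y solve y' = -y² + (f(t)+1)y, y(0)=1. Then y(t) ≤ e^{B+1} for all t ∈ [0,T). -/
/-!
The substitution `z = 1 / y` turns the Riccati equation into the linear equation
`z' = 1 - (f + 1) z`, whose integrating factor is `E(t) = exp (F t + t)` with `F t = ∫₀ᵗ f`.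
Then `(z E - exp)' = E - exp ≥ 0` because `F ≥ 0`, so `z E ≥ exp`, i.e. `z ≥ exp (-F) ≥ exp (-B)`.
-/

open MeasureTheory Set
open scoped ENNReal

lemma hasDerivAt_inv_of_riccati {y : ℝ → ℝ} {a s : ℝ}
    (hy : HasDerivAt y (-(y s) ^ 2 + a * y s) s) (hys : y s ≠ 0) :
    HasDerivAt (fun u => (y u)⁻¹) (1 - a * (y s)⁻¹) s :=
  (hy.inv hys).congr_deriv (by field_simp; ring)

lemma exp_neg_integral_le_of_hasDerivAt {f z : ℝ → ℝ} {t : ℝ} (ht : 0 ≤ t) (hf : Continuous f)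
    (hf0 : ∀ s ∈ Icc 0 t, 0 ≤ f s) (hz0 : z 0 = 1)
    (hz : ∀ s ∈ Icc 0 t, HasDerivAt z (1 - (f s + 1) * z s) s) :
    Real.exp (-∫ s in (0:ℝ)..t, f s) ≤ z t := by
  set F : ℝ → ℝ := fun u => ∫ s in (0:ℝ)..u, f s
  have hF : ∀ u, HasDerivAt F (f u) u := fun u => (hf.integral_hasStrictDerivAt 0 u).hasDerivAt
  have hF_nonneg : ∀ u ∈ Icc 0 t, 0 ≤ F u := fun u hu =>
    intervalIntegral.integral_nonneg hu.1 fun s hs => hf0 s ⟨hs.1, hs.2.trans hu.2⟩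
  set w : ℝ → ℝ := fun u => z u * Real.exp (F u + u) - Real.exp u
  have hw : ∀ u ∈ Icc 0 t, HasDerivAt w (Real.exp (F u + u) - Real.exp u) u := by
    intro u hu
    exact (((hz u hu).mul ((hF u).add (hasDerivAt_id u)).exp).sub
      (Real.hasDerivAt_exp u)).congr_deriv (by simp only [Pi.add_apply, id]; ring)
  have hw_mono : MonotoneOn w (Icc 0 t) := by
    refine monotoneOn_of_hasDerivWithinAt_nonneg (f' := fun u => Real.exp (F u + u) - Real.exp u)
      (convex_Icc 0 t) (fun u hu => (hw u hu).continuousAt.continuousWithinAt) (fun u hu => ?_) (fun u hu => ?_)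
    · exact (hw u (interior_subset hu)).hasDerivWithinAt
    · exact sub_nonneg.mpr <| Real.exp_le_exp.mpr <|
        le_add_of_nonneg_left (hF_nonneg u (interior_subset hu))
  have hwt : w 0 ≤ w t := hw_mono ⟨le_rfl, ht⟩ ⟨ht, le_rfl⟩ ht
  have hw0 : w 0 = 0 := by simp [w, F, hz0]
  calc Real.exp (-F t) = Real.exp t / Real.exp (F t + t) := by
        rw [← Real.exp_sub]; ring_nf
    _ ≤ z t := by
        rw [div_le_iff₀ (Real.exp_pos _)]
        simp only [w] at hwt
        linarith

theorem stmt_2_general (f : ℝ → ℝ) (T : ℝ≥0∞) (B : ℝ)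
    (hf : Continuous f) (hf0 : ∀ t : ℝ, 0 ≤ t → 0 ≤ f t)
    (hint : ∀ t : ℝ, 0 ≤ t → ENNReal.ofReal t < T → (∫ s in (0:ℝ)..t, f s) ≤ B)
    (y : ℝ → ℝ) (hy0 : y 0 = 1)
    (hypos : ∀ t : ℝ, 0 ≤ t → ENNReal.ofReal t < T → 0 < y t)
    (hy : ∀ t : ℝ, 0 ≤ t → ENNReal.ofReal t < T →
      HasDerivAt y (-(y t)^2 + (f t + 1) * y t) t) :
    ∀ t : ℝ, 0 ≤ t → ENNReal.ofReal t < T → y t ≤ Real.exp (B + 1) := by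
  intro t ht0 htT
  have hmem : ∀ s ∈ Icc 0 t, ENNReal.ofReal s < T := fun s hs =>
    (ENNReal.ofReal_le_ofReal hs.2).trans_lt htT
  have hz := exp_neg_integral_le_of_hasDerivAt ht0 hf (fun s hs => hf0 s hs.1) (by simp [hy0])
    fun s hs => hasDerivAt_inv_of_riccati (hy s hs.1 (hmem s hs)) (hypos s hs.1 (hmem s hs)).ne'
  calc y t ≤ Real.exp (∫ s in (0:ℝ)..t, f s) := by
        simpa [Real.exp_neg] using (le_inv_comm₀ (Real.exp_pos _) (hypos t ht0 htT)).mp hz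
    _ ≤ Real.exp (B + 1) := Real.exp_le_exp.mpr (by linarith [hint t ht0 htT])

theorem stmt_2 (f : ℝ → ℝ) (T : ℝ≥0∞) (hT : 0 < T) (B : ℝ) (hB : 0 < B)
    (hf : Continuous f) (hf0 : ∀ t : ℝ, 0 ≤ t → 0 ≤ f t)
    (hint : ∀ t : ℝ, 0 ≤ t → ENNReal.ofReal t < T → (∫ s in (0:ℝ)..t, f s) ≤ B)
    (y : ℝ → ℝ) (hy0 : y 0 = 1)
    (hypos : ∀ t : ℝ, 0 ≤ t → ENNReal.ofReal t < T → 0 < y t)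
    (hy : ∀ t : ℝ, 0 ≤ t → ENNReal.ofReal t < T →
      HasDerivAt y (-(y t)^2 + (f t + 1) * y t) t) :
    ∀ t : ℝ, 0 ≤ t → ENNReal.ofReal t < T → y t ≤ Real.exp (B + 1) :=
  stmt_2_general f T B hf hf0 hint y hy0 hypos hy
end
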